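/- arXiv:2301.02268 — 4 statements merged into one kernel-verified Lean document; each statement's English description precedes it below -/
import Mathlib

section
/- Let f satisfy approximate sharpness with constants α, β, η, and let Γ be an optimization algorithm such that d(x0, X̂) ≤ δ implies f(Γ(δ,ε,x0)) - f̂ + g_Q(Γ(δ,ε,x0)) ≤ ε. Define iterates by ε_{k+1} = r ε_k, δ_{k+1} = (2ε_k/α)^{1/β}, z = Γ(δ_{k+1}, ε_{k+1}, x_k), and x_{k+1} = argmin{f(x)+g_Q(x) : x ∈ {x_k, z}}, starting from x0 with f(x0) - f̂ + g_Q(x0) ≤ ε0. Then for every k with ε_k ≥ η, one has f(x_k) - f̂ + g_Q(x_k) ≤ ε_k and d(x_k, X̂) ≤ (2ε_k/α)^{1/β}. -/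
/-!
If the gap `f x_k - f̂ + g_Q x_k` is at most `ε_k` and `η ≤ ε_k`, approximate sharpness puts `x_k`
within `δ_{k+1} = (2 ε_k / α) ^ (1/β)` of `X̂`, so the restarted algorithm reaches gap `ε_{k+1}`,
and choosing the better of `x_k` and its output keeps that bound. Since `ε_k` decreases,
`η ≤ ε_{k+1}` gives `η ≤ ε_k`, so the induction can run along any decreasing schedule.
-/

open Metric

/-- The distance `δ_{k+1}` to `X̂` guaranteed by approximate sharpness when the gap is `ε_k`. -/
noncomputable def restartRadius (α β ε : ℝ) : ℝ := (2 * ε / α) ^ (1 / β)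

theorem restartRadius_pos {α β ε : ℝ} (hα : 0 < α) (hε : 0 < ε) : 0 < restartRadius α β ε :=
  Real.rpow_pos_of_pos (by positivity) _

section RestartScheme

variable {E : Type*} {D : Set E} {Γ : ℝ → ℝ → E → E} {x : ℕ → E}

theorem restart_iterates_mem {δ ε : ℕ → ℝ} (hδ : ∀ k, 0 < δ k) (hε : ∀ k, 0 < ε k)
    (hΓ : ∀ δ ε : ℝ, 0 < δ → 0 < ε → ∀ x0 ∈ D, Γ δ ε x0 ∈ D) (hx0 : x 0 ∈ D)
    (hnext : ∀ k, x (k + 1) = x k ∨ x (k + 1) = Γ (δ k) (ε (k + 1)) (x k)) :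
    ∀ k, x k ∈ D
  | 0 => hx0
  | k + 1 => by
    rcases hnext k with h | h <;> rw [h]
    · exact restart_iterates_mem hδ hε hΓ hx0 hnext k
    · exact hΓ _ _ (hδ k) (hε (k + 1)) _ (restart_iterates_mem hδ hε hΓ hx0 hnext k)

variable [MetricSpace E] {Xhat : Set E} {f gQ : E → ℝ} {fhat α β η : ℝ}

theorem infDist_le_restartRadius (hα : 0 < α) (hβ : 0 ≤ β)
    (hsharp : ∀ y ∈ D, 0 ≤ f y - fhat + gQ y + η ∧
      infDist y Xhat ≤ ((f y - fhat + gQ y + η) / α) ^ (1 / β))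
    {y : E} (hy : y ∈ D) {ε : ℝ} (hgap : f y - fhat + gQ y ≤ ε) (hηε : η ≤ ε) :
    infDist y Xhat ≤ restartRadius α β ε := by
  obtain ⟨hnonneg, hdist⟩ := hsharp y hy
  refine hdist.trans (Real.rpow_le_rpow (by positivity) ?_ (by positivity))
  gcongr
  linarith

theorem restart_scheme_iterates {ε : ℕ → ℝ} (hα : 0 < α) (hβ : 0 ≤ β)
    (hε : ∀ k, 0 < ε k) (hε_anti : Antitone ε)
    (hsharp : ∀ y ∈ D, 0 ≤ f y - fhat + gQ y + η ∧
      infDist y Xhat ≤ ((f y - fhat + gQ y + η) / α) ^ (1 / β))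
    (hΓ : ∀ δ ε : ℝ, 0 < δ → 0 < ε → ∀ x0 ∈ D, Γ δ ε x0 ∈ D ∧
      (infDist x0 Xhat ≤ δ → f (Γ δ ε x0) - fhat + gQ (Γ δ ε x0) ≤ ε))
    (hx0 : x 0 ∈ D) (hinit : f (x 0) - fhat + gQ (x 0) ≤ ε 0)
    (hstep : ∀ k : ℕ,
      (x (k + 1) = x k ∨ x (k + 1) = Γ (restartRadius α β (ε k)) (ε (k + 1)) (x k)) ∧
      f (x (k + 1)) + gQ (x (k + 1)) =
        min (f (x k) + gQ (x k))
          (f (Γ (restartRadius α β (ε k)) (ε (k + 1)) (x k)) +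
            gQ (Γ (restartRadius α β (ε k)) (ε (k + 1)) (x k)))) :
    ∀ k, η ≤ ε k →
      f (x k) - fhat + gQ (x k) ≤ ε k ∧ infDist (x k) Xhat ≤ restartRadius α β (ε k) := by
  have hmem := restart_iterates_mem (fun k => restartRadius_pos hα (hε k)) hε
    (fun δ ε hδ hε x0 hx0 => (hΓ δ ε hδ hε x0 hx0).1) hx0 (fun k => (hstep k).1)
  have hgap : ∀ k, η ≤ ε k → f (x k) - fhat + gQ (x k) ≤ ε k := by
    intro k hηk
    induction k with
    | zero => exact hinit
    | succ k ih =>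
      have hηk' : η ≤ ε k := hηk.trans (hε_anti k.le_succ)
      have hnear := infDist_le_restartRadius hα hβ hsharp (hmem k) (ih hηk') hηk'
      have hout := (hΓ _ _ (restartRadius_pos hα (hε k)) (hε (k + 1)) _ (hmem k)).2 hnear
      linarith [(hstep k).2.trans_le (min_le_right _ _)]
  exact fun k hηk =>
    ⟨hgap k hηk, infDist_le_restartRadius hα hβ hsharp (hmem k) (hgap k hηk) hηk⟩

end RestartScheme

theorem restart_scheme_known_consts_iterates_general {E : Type*} [MetricSpace E]
    (D Xhat : Set E) (f gQ : E → ℝ) (fhat α β η r ε0 : ℝ)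
    (Γ : ℝ → ℝ → E → E) (x : ℕ → E)
    (hα : 0 < α) (hβ : 1 ≤ β) (hr0 : 0 < r) (hr1 : r < 1) (hε0 : 0 < ε0)
    (hsharp : ∀ y ∈ D, 0 ≤ f y - fhat + gQ y + η ∧
      Metric.infDist y Xhat ≤ ((f y - fhat + gQ y + η) / α) ^ (1 / β))
    (hΓ : ∀ δ ε : ℝ, 0 < δ → 0 < ε → ∀ x0 ∈ D, Γ δ ε x0 ∈ D ∧
      (Metric.infDist x0 Xhat ≤ δ → f (Γ δ ε x0) - fhat + gQ (Γ δ ε x0) ≤ ε))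
    (hx0 : x 0 ∈ D) (hinit : f (x 0) - fhat + gQ (x 0) ≤ ε0)
    (hstep : ∀ k : ℕ,
      (x (k + 1) = x k ∨
        x (k + 1) = Γ ((2 * (r ^ k * ε0) / α) ^ (1 / β)) (r ^ (k + 1) * ε0) (x k)) ∧
      f (x (k + 1)) + gQ (x (k + 1)) =
        min (f (x k) + gQ (x k))
          (f (Γ ((2 * (r ^ k * ε0) / α) ^ (1 / β)) (r ^ (k + 1) * ε0) (x k)) +
            gQ (Γ ((2 * (r ^ k * ε0) / α) ^ (1 / β)) (r ^ (k + 1) * ε0) (x k)))) :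
    ∀ k : ℕ, η ≤ r ^ k * ε0 →
      f (x k) - fhat + gQ (x k) ≤ r ^ k * ε0 ∧
      Metric.infDist (x k) Xhat ≤ (2 * (r ^ k * ε0) / α) ^ (1 / β) := by
  have hε : ∀ k : ℕ, 0 < r ^ k * ε0 := fun k => mul_pos (pow_pos hr0 k) hε0
  have hε_anti : Antitone fun k : ℕ => r ^ k * ε0 := fun _ _ hmn =>
    mul_le_mul_of_nonneg_right (pow_le_pow_of_le_one hr0.le hr1.le hmn) hε0.le
  exact restart_scheme_iterates hα (zero_le_one.trans hβ) hε hε_anti hsharp hΓ hx0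
    (by simpa using hinit) hstep

/-- Restart scheme with known `α`, `β` (Algorithm 1): under approximate sharpness with constants
`α, β, η`, the iterates `x_k` satisfy `f x_k - f̂ + g_Q x_k ≤ ε_k` and
`d(x_k, X̂) ≤ (2 ε_k / α) ^ (1/β)` for every `k` with `ε_k = r^k ε₀ ≥ η`. -/
theorem restart_scheme_known_consts_iterates {E : Type*} [MetricSpace E]
    (D Xhat : Set E) (f gQ : E → ℝ) (fhat α β η r ε0 : ℝ)
    (Γ : ℝ → ℝ → E → E) (x : ℕ → E)
    (hα : 0 < α) (hβ : 1 ≤ β) (hη : 0 ≤ η) (hr0 : 0 < r) (hr1 : r < 1) (hε0 : 0 < ε0)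
    (hsharp : ∀ y ∈ D, 0 ≤ f y - fhat + gQ y + η ∧
      Metric.infDist y Xhat ≤ ((f y - fhat + gQ y + η) / α) ^ (1 / β))
    (hΓ : ∀ δ ε : ℝ, 0 < δ → 0 < ε → ∀ x0 ∈ D, Γ δ ε x0 ∈ D ∧
      (Metric.infDist x0 Xhat ≤ δ → f (Γ δ ε x0) - fhat + gQ (Γ δ ε x0) ≤ ε))
    (hx0 : x 0 ∈ D) (hinit : f (x 0) - fhat + gQ (x 0) ≤ ε0)
    (hstep : ∀ k : ℕ,
      (x (k + 1) = x k ∨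
        x (k + 1) = Γ ((2 * (r ^ k * ε0) / α) ^ (1 / β)) (r ^ (k + 1) * ε0) (x k)) ∧
      f (x (k + 1)) + gQ (x (k + 1)) =
        min (f (x k) + gQ (x k))
          (f (Γ ((2 * (r ^ k * ε0) / α) ^ (1 / β)) (r ^ (k + 1) * ε0) (x k)) +
            gQ (Γ ((2 * (r ^ k * ε0) / α) ^ (1 / β)) (r ^ (k + 1) * ε0) (x k)))) :
    ∀ k : ℕ, η ≤ r ^ k * ε0 →
      f (x k) - fhat + gQ (x k) ≤ r ^ k * ε0 ∧
      Metric.infDist (x k) Xhat ≤ (2 * (r ^ k * ε0) / α) ^ (1 / β) :=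
  restart_scheme_known_consts_iterates_general D Xhat f gQ fhat α β η r ε0 Γ x hα hβ hr0 hr1 hε0
    hsharp hΓ hx0 hinit hstep
end

section
/- Under the hypotheses of the restart scheme with known α and β (Algorithm 1), if additionally the cost function satisfies C_Γ(δ, ε) ≤ C δ^{d1}/ε^{d2} + 1 for constants C, d1, d2 > 0, and d2 = d1/β, then the total number of inner iterations needed to reach an iterate x with f(x) - f̂ + g_Q(x) ≤ max{η, ε} is at most (1 + C·2^{d1/β}/(α^{d1/β} r^{d2})) · ⌈log(ε0/ε)/log(1/r)⌉. -/
/-- Restart scheme with known `α`, `β` and cost bound `C_Γ(δ, ε) ≤ C δ^{d₁}/ε^{d₂} + 1` with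
`d₂ = d₁/β`: after `s = ⌈log(ε₀/ε)/log(1/r)⌉` restarts, the iterate `x_s` satisfies
`f x_s - f̂ + g_Q x_s ≤ max {η, ε}`, and the total number of inner iterations is at most
`(1 + C 2^{d₁/β} / (α^{d₁/β} r^{d₂})) ⌈log(ε₀/ε)/log(1/r)⌉`. -/
theorem restart_scheme_cost_linear {E : Type*} [MetricSpace E]
    (D Xhat : Set E) (f gQ : E → ℝ) (fhat α β η r ε0 : ℝ)
    (Γ : ℝ → ℝ → E → E) (x : ℕ → E) (CΓ : ℝ → ℝ → ℕ) (C d1 d2 : ℝ)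
    (hα : 0 < α) (hβ : 1 ≤ β) (hη : 0 ≤ η) (hr0 : 0 < r) (hr1 : r < 1) (hε0 : 0 < ε0)
    (hC : 0 < C) (hd1 : 0 < d1) (hd2 : 0 < d2) (hd : d2 = d1 / β)
    (hsharp : ∀ y ∈ D, 0 ≤ f y - fhat + gQ y + η ∧
      Metric.infDist y Xhat ≤ ((f y - fhat + gQ y + η) / α) ^ (1 / β))
    (hΓ : ∀ δ ε : ℝ, 0 < δ → 0 < ε → ∀ x0 ∈ D, Γ δ ε x0 ∈ D ∧
      (Metric.infDist x0 Xhat ≤ δ → f (Γ δ ε x0) - fhat + gQ (Γ δ ε x0) ≤ ε))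
    (hcost : ∀ δ ε : ℝ, 0 < δ → 0 < ε → (CΓ δ ε : ℝ) ≤ C * δ ^ d1 / ε ^ d2 + 1)
    (hx0 : x 0 ∈ D) (hinit : f (x 0) - fhat + gQ (x 0) ≤ ε0)
    (hstep : ∀ k : ℕ,
      (x (k + 1) = x k ∨
        x (k + 1) = Γ ((2 * (r ^ k * ε0) / α) ^ (1 / β)) (r ^ (k + 1) * ε0) (x k)) ∧
      f (x (k + 1)) + gQ (x (k + 1)) =
        min (f (x k) + gQ (x k))
          (f (Γ ((2 * (r ^ k * ε0) / α) ^ (1 / β)) (r ^ (k + 1) * ε0) (x k)) +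
            gQ (Γ ((2 * (r ^ k * ε0) / α) ^ (1 / β)) (r ^ (k + 1) * ε0) (x k))))
    (ε : ℝ) (hε : 0 < ε) (hεε0 : ε < ε0) (s : ℕ)
    (hs : s = ⌈Real.log (ε0 / ε) / Real.log (1 / r)⌉₊) :
    f (x s) - fhat + gQ (x s) ≤ max η ε ∧
    (∑ k ∈ Finset.range s,
        (CΓ ((2 * (r ^ k * ε0) / α) ^ (1 / β)) (r ^ (k + 1) * ε0) : ℝ)) ≤
      (1 + C * 2 ^ (d1 / β) / (α ^ (d1 / β) * r ^ d2)) * s := by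
  have hβ0 : 0 < β := lt_of_lt_of_le one_pos hβ
  have hrk : ∀ k : ℕ, 0 < r ^ k * ε0 := fun k => mul_pos (pow_pos hr0 k) hε0
  have hδpos : ∀ k : ℕ, 0 < (2 * (r ^ k * ε0) / α) ^ (1 / β) := fun k =>
    Real.rpow_pos_of_pos (by have := hrk k; positivity) _
  -- main invariant
  have key : ∀ k : ℕ, x k ∈ D ∧ f (x k) - fhat + gQ (x k) ≤ max η (r ^ k * ε0) := by
    intro k
    induction k with
    | zero =>
      refine ⟨hx0, ?_⟩
      simpa using hinit.trans (le_max_right η ε0)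
    | succ k ih =>
      obtain ⟨hmem, hb⟩ := ih
      have hΓk := hΓ _ _ (hδpos k) (hrk (k + 1)) (x k) hmem
      obtain ⟨hor, hmin⟩ := hstep k
      have hmemD : x (k + 1) ∈ D := by
        rcases hor with h | h
        · rw [h]; exact hmem
        · rw [h]; exact hΓk.1
      refine ⟨hmemD, ?_⟩
      rcases le_or_gt η (r ^ k * ε0) with hcase | hcase
      · have hbb : f (x k) - fhat + gQ (x k) ≤ r ^ k * ε0 := by
          rw [max_eq_right hcase] at hb; exact hb
        have hdist : Metric.infDist (x k) Xhat ≤ (2 * (r ^ k * ε0) / α) ^ (1 / β) := by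
          refine (hsharp _ hmem).2.trans ?_
          refine Real.rpow_le_rpow (div_nonneg (hsharp _ hmem).1 hα.le) ?_ (by positivity)
          gcongr
          linarith
        have hgood := hΓk.2 hdist
        have hle : f (x (k + 1)) + gQ (x (k + 1)) ≤
            f (Γ ((2 * (r ^ k * ε0) / α) ^ (1 / β)) (r ^ (k + 1) * ε0) (x k)) +
              gQ (Γ ((2 * (r ^ k * ε0) / α) ^ (1 / β)) (r ^ (k + 1) * ε0) (x k)) := by
          rw [hmin]; exact min_le_right _ _
        have : f (x (k + 1)) - fhat + gQ (x (k + 1)) ≤ r ^ (k + 1) * ε0 := by linarith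
        exact this.trans (le_max_right _ _)
      · have hle : f (x (k + 1)) + gQ (x (k + 1)) ≤ f (x k) + gQ (x k) := by
          rw [hmin]; exact min_le_left _ _
        have hbb : f (x k) - fhat + gQ (x k) ≤ η := by
          rw [max_eq_left hcase.le] at hb; exact hb
        have : f (x (k + 1)) - fhat + gQ (x (k + 1)) ≤ η := by linarith
        exact this.trans (le_max_left _ _)
  constructor
  · -- accuracy at step s
    have hrs : r ^ s * ε0 ≤ ε := by
      have hlog : Real.log (ε0 / ε) / Real.log (1 / r) ≤ (s : ℝ) := by
        rw [hs]; exact Nat.le_ceil _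
      have hlr : 0 < Real.log (1 / r) := Real.log_pos (by rw [lt_div_iff₀ hr0]; linarith)
      have h1 : Real.log (ε0 / ε) ≤ (s : ℝ) * Real.log (1 / r) := by
        rw [div_le_iff₀ hlr] at hlog; linarith
      have h2 : Real.log (r ^ s) ≤ Real.log (ε / ε0) := by
        rw [Real.log_div hε0.ne' hε.ne', one_div, Real.log_inv] at h1
        rw [Real.log_pow, Real.log_div hε.ne' hε0.ne']
        push_cast
        nlinarith
      have := (Real.log_le_log_iff (pow_pos hr0 s) (div_pos hε hε0)).mp h2
      rw [le_div_iff₀ hε0] at this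
      linarith [this]
    have := (key s).2
    refine this.trans (max_le_max le_rfl hrs)
  · -- cost
    set K : ℝ := 1 + C * 2 ^ (d1 / β) / (α ^ (d1 / β) * r ^ d2) with hK
    have hterm : ∀ k : ℕ,
        (CΓ ((2 * (r ^ k * ε0) / α) ^ (1 / β)) (r ^ (k + 1) * ε0) : ℝ) ≤ K := by
      intro k
      refine (hcost _ _ (hδpos k) (hrk (k + 1))).trans ?_
      set t : ℝ := r ^ k * ε0 with ht
      have htpos : 0 < t := hrk k
      have hA : (0 : ℝ) < 2 * t / α := by positivity
      set p := d1 / β with hpdef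
      have hδ : ((2 * t / α) ^ (1 / β)) ^ d1 = 2 ^ p * t ^ p / α ^ p := by
        rw [← Real.rpow_mul hA.le,
          show 1 / β * d1 = p by rw [hpdef]; field_simp,
          Real.div_rpow (by positivity) hα.le,
          Real.mul_rpow (by norm_num) htpos.le]
      have hε' : (r ^ (k + 1) * ε0) ^ d2 = r ^ p * t ^ p := by
        rw [hd, show r ^ (k + 1) * ε0 = r * t from by rw [ht, pow_succ]; ring,
          Real.mul_rpow hr0.le htpos.le]
      rw [hδ, hε', hK, hd]
      have h2p : (0 : ℝ) < 2 ^ p := Real.rpow_pos_of_pos two_pos p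
      have hαp : (0 : ℝ) < α ^ p := Real.rpow_pos_of_pos hα p
      have hrp : (0 : ℝ) < r ^ p := Real.rpow_pos_of_pos hr0 p
      have htp : (0 : ℝ) < t ^ p := Real.rpow_pos_of_pos htpos p
      have heq : C * (2 ^ p * t ^ p / α ^ p) / (r ^ p * t ^ p) =
          C * 2 ^ p / (α ^ p * r ^ p) := by
        field_simp
      rw [heq]
      linarith
    calc (∑ k ∈ Finset.range s,
            (CΓ ((2 * (r ^ k * ε0) / α) ^ (1 / β)) (r ^ (k + 1) * ε0) : ℝ))
        ≤ ∑ _k ∈ Finset.range s, K := Finset.sum_le_sum fun k _ => hterm k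
      _ = K * s := by rw [Finset.sum_const, Finset.card_range, nsmul_eq_mul, mul_comm]
end

section
/- Under the hypotheses of the restart scheme with known α, β, cost bound C_Γ(δ,ε) ≤ C δ^{d1}/ε^{d2} + 1, and d2 > d1/β, the total number of inner iterations needed to obtain f(x) - f̂ + g_Q(x) ≤ max{η, ε} is at most ⌈log(ε0/ε)/log(1/r)⌉ + (C 2^{d1/β}/(α^{d1/β} r^{d2})) · ((1 - r^{⌈log(ε0/ε)/log(1/r)⌉(d2 - d1/β)})/(1 - r^{d2 - d1/β})) · ε^{-(d2 - d1/β)}. -/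
/-- Restart scheme with known `α`, `β` and cost bound `C_Γ(δ, ε) ≤ C δ^{d₁}/ε^{d₂} + 1` with
`d₂ > d₁/β`: after `s = ⌈log(ε₀/ε)/log(1/r)⌉` restarts, the iterate `x_s` satisfies
`f x_s - f̂ + g_Q x_s ≤ max {η, ε}`, and the total number of inner iterations is at most
`(1 + C 2^{d₁/β} / (α^{d₁/β} r^{d₂})) ⌈log(ε₀/ε)/log(1/r)⌉`. -/
theorem restart_scheme_cost_algebraic {E : Type*} [MetricSpace E]
    (D Xhat : Set E) (f gQ : E → ℝ) (fhat α β η r ε0 : ℝ)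
    (Γ : ℝ → ℝ → E → E) (x : ℕ → E) (CΓ : ℝ → ℝ → ℕ) (C d1 d2 : ℝ)
    (hα : 0 < α) (hβ : 1 ≤ β) (hη : 0 ≤ η) (hr0 : 0 < r) (hr1 : r < 1) (hε0 : 0 < ε0)
    (hC : 0 < C) (hd1 : 0 < d1) (hd2 : 0 < d2) (hd : d1 / β < d2)
    (hsharp : ∀ y ∈ D, 0 ≤ f y - fhat + gQ y + η ∧
      Metric.infDist y Xhat ≤ ((f y - fhat + gQ y + η) / α) ^ (1 / β))
    (hΓ : ∀ δ ε : ℝ, 0 < δ → 0 < ε → ∀ x0 ∈ D, Γ δ ε x0 ∈ D ∧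
      (Metric.infDist x0 Xhat ≤ δ → f (Γ δ ε x0) - fhat + gQ (Γ δ ε x0) ≤ ε))
    (hcost : ∀ δ ε : ℝ, 0 < δ → 0 < ε → (CΓ δ ε : ℝ) ≤ C * δ ^ d1 / ε ^ d2 + 1)
    (hx0 : x 0 ∈ D) (hinit : f (x 0) - fhat + gQ (x 0) ≤ ε0)
    (hstep : ∀ k : ℕ,
      (x (k + 1) = x k ∨
        x (k + 1) = Γ ((2 * (r ^ k * ε0) / α) ^ (1 / β)) (r ^ (k + 1) * ε0) (x k)) ∧
      f (x (k + 1)) + gQ (x (k + 1)) =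
        min (f (x k) + gQ (x k))
          (f (Γ ((2 * (r ^ k * ε0) / α) ^ (1 / β)) (r ^ (k + 1) * ε0) (x k)) +
            gQ (Γ ((2 * (r ^ k * ε0) / α) ^ (1 / β)) (r ^ (k + 1) * ε0) (x k))))
    (ε : ℝ) (hε : 0 < ε) (hεε0 : ε < ε0) (s : ℕ)
    (hs : s = ⌈Real.log (ε0 / ε) / Real.log (1 / r)⌉₊) :
    f (x s) - fhat + gQ (x s) ≤ max η ε ∧
    (∑ k ∈ Finset.range s,
        (CΓ ((2 * (r ^ k * ε0) / α) ^ (1 / β)) (r ^ (k + 1) * ε0) : ℝ)) ≤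
      (s : ℝ) + C * 2 ^ (d1 / β) / (α ^ (d1 / β) * r ^ d2) *
        ((1 - r ^ ((s : ℝ) * (d2 - d1 / β))) / (1 - r ^ (d2 - d1 / β))) *
        ε ^ (-(d2 - d1 / β)) := by
  have hβ0 : (0:ℝ) < β := lt_of_lt_of_le one_pos hβ
  set a := d1 / β with ha_def
  have ha : 0 < a := div_pos hd1 hβ0
  set e := d2 - a with he_def
  have he : 0 < e := sub_pos.2 hd
  -- Induction: x k ∈ D and value bound
  have key : ∀ k, x k ∈ D ∧ f (x k) - fhat + gQ (x k) ≤ max η (r ^ k * ε0) := by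
    intro k
    induction k with
    | zero =>
      refine ⟨hx0, ?_⟩
      simpa using hinit.trans (le_max_right η ε0)
    | succ k ih =>
      obtain ⟨hD, hle⟩ := ih
      have htk : 0 < r ^ k * ε0 := by positivity
      have hδ : 0 < (2 * (r ^ k * ε0) / α) ^ (1/β) :=
        Real.rpow_pos_of_pos (by positivity) _
      have hε1 : 0 < r ^ (k+1) * ε0 := by positivity
      obtain ⟨hΓD, hΓval⟩ := hΓ _ _ hδ hε1 (x k) hD
      obtain ⟨hmem, hval⟩ := hstep k
      have hD' : x (k+1) ∈ D := by
        rcases hmem with h | h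
        · rw [h]; exact hD
        · rw [h]; exact hΓD
      refine ⟨hD', ?_⟩
      rcases le_or_gt η (r ^ k * ε0) with hcase | hcase
      · have hsh := hsharp (x k) hD
        have hle' : f (x k) - fhat + gQ (x k) ≤ r ^ k * ε0 := by
          rw [max_eq_right hcase] at hle; exact hle
        have hbase : f (x k) - fhat + gQ (x k) + η ≤ 2 * (r ^ k * ε0) := by linarith
        have hdist : Metric.infDist (x k) Xhat ≤ (2 * (r ^ k * ε0) / α) ^ (1/β) := by
          refine hsh.2.trans (Real.rpow_le_rpow (div_nonneg hsh.1 hα.le) ?_ (by positivity))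
          gcongr
        have hΓ2 := hΓval hdist
        have hmin : f (x (k+1)) + gQ (x (k+1)) ≤
            f (Γ ((2 * (r ^ k * ε0) / α) ^ (1 / β)) (r ^ (k + 1) * ε0) (x k)) +
              gQ (Γ ((2 * (r ^ k * ε0) / α) ^ (1 / β)) (r ^ (k + 1) * ε0) (x k)) := by
          rw [hval]; exact min_le_right _ _
        exact le_max_of_le_right (by linarith)
      · have hle' : f (x k) - fhat + gQ (x k) ≤ η := by
          rw [max_eq_left hcase.le] at hle; exact hle
        have hmin : f (x (k+1)) + gQ (x (k+1)) ≤ f (x k) + gQ (x k) := by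
          rw [hval]; exact min_le_left _ _
        exact le_max_of_le_left (by linarith)
  -- logarithm facts
  have hlogr : 0 < Real.log (1/r) := Real.log_pos (by rw [lt_div_iff₀ hr0]; linarith)
  have hL : 0 < Real.log (ε0/ε) := Real.log_pos ((one_lt_div hε).2 hεε0)
  have hlog1r : Real.log (1/r) = -Real.log r := by
    rw [Real.log_div one_ne_zero hr0.ne', Real.log_one]; ring
  have hrs : r ^ s * ε0 ≤ ε := by
    have h1 : Real.log (ε0/ε) ≤ (s:ℝ) * Real.log (1/r) := by
      rw [← div_le_iff₀ hlogr] at *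
      exact hs ▸ Nat.le_ceil _
    have h2 : Real.log (r ^ s * ε0) ≤ Real.log ε := by
      rw [Real.log_mul (by positivity) hε0.ne', Real.log_pow]
      rw [Real.log_div hε0.ne' hε.ne', hlog1r] at h1
      push_cast
      linarith
    exact (Real.log_le_log_iff (by positivity) hε).1 h2
  have hrε : r * ε ≤ r ^ s * ε0 := by
    have h0 : (s:ℝ) < Real.log (ε0/ε) / Real.log (1/r) + 1 := by
      rw [hs]; exact Nat.ceil_lt_add_one (by positivity)
    have h1 : ((s:ℝ) - 1) * Real.log (1/r) < Real.log (ε0/ε) := by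
      have h' : (s:ℝ) - 1 < Real.log (ε0/ε) / Real.log (1/r) := by linarith
      calc ((s:ℝ)-1) * Real.log (1/r)
          < (Real.log (ε0/ε) / Real.log (1/r)) * Real.log (1/r) :=
            mul_lt_mul_of_pos_right h' hlogr
        _ = Real.log (ε0/ε) := div_mul_cancel₀ _ hlogr.ne'
    have h2 : Real.log (r * ε) ≤ Real.log (r ^ s * ε0) := by
      rw [Real.log_mul hr0.ne' hε.ne', Real.log_mul (by positivity) hε0.ne', Real.log_pow]
      rw [Real.log_div hε0.ne' hε.ne', hlog1r] at h1
      push_cast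
      nlinarith
    exact (Real.log_le_log_iff (by positivity) (by positivity)).1 h2
  constructor
  · exact (key s).2.trans (max_le_max le_rfl hrs)
  -- cost bound
  · set K := C * 2 ^ a / (α ^ a * r ^ d2) with hK_def
    have hαa : (0:ℝ) < α ^ a := Real.rpow_pos_of_pos hα _
    have hrd2 : (0:ℝ) < r ^ d2 := Real.rpow_pos_of_pos hr0 _
    have hK : 0 < K := by
      apply div_pos (mul_pos hC (Real.rpow_pos_of_pos two_pos _)) (mul_pos hαa hrd2)
    have hterm : ∀ k : ℕ,
        (CΓ ((2 * (r ^ k * ε0) / α) ^ (1 / β)) (r ^ (k + 1) * ε0) : ℝ) ≤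
          K * (r ^ k * ε0) ^ (-e) + 1 := by
      intro k
      have htk : 0 < r ^ k * ε0 := by positivity
      have hb : 0 < 2 * (r ^ k * ε0) / α := by positivity
      have h1 := hcost ((2 * (r ^ k * ε0) / α) ^ (1/β)) (r ^ (k+1) * ε0)
        (Real.rpow_pos_of_pos hb _) (by positivity)
      refine h1.trans (le_of_eq ?_)
      have hδd1 : ((2 * (r ^ k * ε0) / α) ^ (1/β)) ^ d1
          = 2 ^ a * (r ^ k * ε0) ^ a / α ^ a := by
        rw [← Real.rpow_mul hb.le, show 1/β*d1 = a by rw [ha_def]; ring,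
          Real.div_rpow (by positivity) hα.le, Real.mul_rpow (by norm_num) htk.le]
      have hεd2 : (r ^ (k+1) * ε0) ^ d2 = r ^ d2 * (r ^ k * ε0) ^ d2 := by
        rw [show r ^ (k+1) * ε0 = r * (r ^ k * ε0) by ring, Real.mul_rpow hr0.le htk.le]
      have htke : (r ^ k * ε0) ^ (-e) = (r ^ k * ε0) ^ a / (r ^ k * ε0) ^ d2 := by
        rw [show -e = a - d2 by rw [he_def]; ring, Real.rpow_sub htk]
      rw [hδd1, hεd2, htke, hK_def]
      have h2 : ((r ^ k * ε0) ^ d2) ≠ 0 := (Real.rpow_pos_of_pos htk _).ne'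
      field_simp
    have hqpos : (0:ℝ) < r ^ (-e) := Real.rpow_pos_of_pos hr0 _
    have hu1 : r ^ e < 1 := Real.rpow_lt_one hr0.le hr1 he
    have hupos : (0:ℝ) < r ^ e := Real.rpow_pos_of_pos hr0 _
    have hq1 : (r:ℝ) ^ (-e) ≠ 1 := by
      rw [Real.rpow_neg hr0.le]
      exact (one_lt_inv₀ hupos |>.2 hu1).ne'
    have hsum1 : (∑ k ∈ Finset.range s,
        (CΓ ((2 * (r ^ k * ε0) / α) ^ (1 / β)) (r ^ (k + 1) * ε0) : ℝ)) ≤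
        (s:ℝ) + K * ∑ k ∈ Finset.range s, (r ^ k * ε0) ^ (-e) := by
      calc (∑ k ∈ Finset.range s, (CΓ ((2 * (r ^ k * ε0) / α) ^ (1 / β)) (r ^ (k + 1) * ε0) : ℝ))
          ≤ ∑ k ∈ Finset.range s, (K * (r ^ k * ε0) ^ (-e) + 1) :=
            Finset.sum_le_sum fun k _ => hterm k
        _ = (s:ℝ) + K * ∑ k ∈ Finset.range s, (r ^ k * ε0) ^ (-e) := by
            rw [Finset.sum_add_distrib, Finset.sum_const, ← Finset.mul_sum]
            simp [add_comm]
    -- rewrite the summands as a geometric series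
    have hre : ∀ k : ℕ, (r ^ k * ε0) ^ (-e) = (r ^ (-e)) ^ k * ε0 ^ (-e) := by
      intro k
      rw [Real.mul_rpow (by positivity) hε0.le, ← Real.rpow_natCast r k,
        ← Real.rpow_mul hr0.le, mul_comm (k:ℝ) (-e), Real.rpow_mul hr0.le,
        Real.rpow_natCast]
    have hgeom : ∑ k ∈ Finset.range s, (r ^ k * ε0) ^ (-e)
        = ((r ^ (-e)) ^ s - 1) / (r ^ (-e) - 1) * ε0 ^ (-e) := by
      simp only [hre, ← Finset.sum_mul, geom_sum_eq hq1]
    -- key inequality for the geometric sum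
    have hvs : r ^ ((s:ℝ) * e) = (r ^ e) ^ s := by
      rw [mul_comm, Real.rpow_mul hr0.le, Real.rpow_natCast]
    have hvpos : (0:ℝ) < (r ^ e) ^ s := pow_pos hupos s
    have hv1 : (r ^ e) ^ s ≤ 1 := pow_le_one₀ hupos.le hu1.le
    have hrsε : (r ^ s * ε0) ^ (-e) = ((r ^ e) ^ s)⁻¹ * ε0 ^ (-e) := by
      rw [Real.mul_rpow (by positivity) hε0.le, ← Real.rpow_natCast r s,
        ← Real.rpow_mul hr0.le, show (s:ℝ) * (-e) = -(e * (s:ℝ)) by ring,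
        Real.rpow_neg hr0.le, Real.rpow_mul hr0.le, Real.rpow_natCast]
    have hqinv : r ^ (-e) = (r ^ e)⁻¹ := Real.rpow_neg hr0.le e
    have hGnn : 0 ≤ (1 - (r ^ e) ^ s) / (1 - r ^ e) :=
      div_nonneg (by linarith) (by linarith)
    have hmain : ((r ^ (-e)) ^ s - 1) / (r ^ (-e) - 1) * ε0 ^ (-e)
        ≤ (1 - r ^ ((s:ℝ) * e)) / (1 - r ^ e) * ε ^ (-e) := by
      have heq : ((r ^ (-e)) ^ s - 1) / (r ^ (-e) - 1) * ε0 ^ (-e)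
          = (r ^ s * ε0) ^ (-e) * (r ^ e) * ((1 - (r ^ e) ^ s) / (1 - r ^ e)) := by
        rw [hrsε, hqinv, inv_pow]
        have h1 : (r ^ e : ℝ) ≠ 0 := hupos.ne'
        have h2 : ((r ^ e : ℝ) ^ s) ≠ 0 := hvpos.ne'
        have h3 : (1 - r ^ e : ℝ) ≠ 0 := by linarith
        have h4 : ((r ^ e)⁻¹ - 1 : ℝ) ≠ 0 := by
          rw [sub_ne_zero]
          exact (one_lt_inv₀ hupos |>.2 hu1).ne'
        field_simp
      have hbound : (r ^ s * ε0) ^ (-e) ≤ (r ^ e)⁻¹ * ε ^ (-e) := by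
        have h5 : (r * ε) ^ (-e) = (r ^ e)⁻¹ * ε ^ (-e) := by
          rw [Real.mul_rpow hr0.le hε.le, Real.rpow_neg hr0.le]
        rw [← h5]
        exact Real.rpow_le_rpow_of_nonpos (by positivity) hrε (by linarith)
      calc ((r ^ (-e)) ^ s - 1) / (r ^ (-e) - 1) * ε0 ^ (-e)
          = (r ^ s * ε0) ^ (-e) * (r ^ e) * ((1 - (r ^ e) ^ s) / (1 - r ^ e)) := heq
        _ ≤ ((r ^ e)⁻¹ * ε ^ (-e)) * (r ^ e) * ((1 - (r ^ e) ^ s) / (1 - r ^ e)) := by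
            apply mul_le_mul_of_nonneg_right _ hGnn
            exact mul_le_mul_of_nonneg_right hbound hupos.le
        _ = (1 - (r ^ e) ^ s) / (1 - r ^ e) * ε ^ (-e) := by
            field_simp
        _ = (1 - r ^ ((s:ℝ) * e)) / (1 - r ^ e) * ε ^ (-e) := by rw [hvs]
    calc (∑ k ∈ Finset.range s,
          (CΓ ((2 * (r ^ k * ε0) / α) ^ (1 / β)) (r ^ (k + 1) * ε0) : ℝ))
        ≤ (s:ℝ) + K * ∑ k ∈ Finset.range s, (r ^ k * ε0) ^ (-e) := hsum1
      _ = (s:ℝ) + K * (((r ^ (-e)) ^ s - 1) / (r ^ (-e) - 1) * ε0 ^ (-e)) := by rw [hgeom]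
      _ ≤ (s:ℝ) + K * ((1 - r ^ ((s:ℝ) * e)) / (1 - r ^ e) * ε ^ (-e)) := by
          exact add_le_add_right (mul_le_mul_of_nonneg_left hmain hK.le) _
      _ = (s:ℝ) + K * ((1 - r ^ ((s:ℝ) * e)) / (1 - r ^ e)) * ε ^ (-e) := by ring
end

section
/- Let ε ∈ (0, 1/e), b = 1 + 1/log(1/ε), β ≥ 1, d1, d2 > 0 with d2 ≥ d1/β, and suppose β ≤ β* ≤ bβ. Then (1/ε)^{d2 - d1/β*} ≤ e^{d2} · ε^{d1/β - d2}. -/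
/-- With `b = 1 + 1/log(1/ε)` and `β ≤ β* ≤ bβ`, the algebraic factor satisfies
`(1/ε)^{d₂ - d₁/β*} ≤ e^{d₂} ε^{d₁/β - d₂}`. -/
theorem eps_dependent_base_bound (ε b β βs d1 d2 : ℝ)
    (hε0 : 0 < ε) (hε1 : ε < 1 / Real.exp 1)
    (hb : b = 1 + 1 / Real.log (1 / ε))
    (hβ : 1 ≤ β) (hd1 : 0 < d1) (hd2 : 0 < d2) (hdd : d1 / β ≤ d2)
    (hβs1 : β ≤ βs) (hβs2 : βs ≤ b * β) :
    (1 / ε) ^ (d2 - d1 / βs) ≤ Real.exp d2 * ε ^ (d1 / β - d2) := by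
  set L := Real.log (1 / ε) with hLdef
  have hεinv : 0 < 1 / ε := by positivity
  have hL : 1 < L := by
    have h1 : Real.exp 1 < 1 / ε := by
      rw [lt_div_iff₀ hε0]
      rw [lt_div_iff₀ (Real.exp_pos 1)] at hε1
      linarith [hε1]
    calc 1 = Real.log (Real.exp 1) := (Real.log_exp 1).symm
      _ < L := Real.log_lt_log (Real.exp_pos 1) h1
  have hL0 : (0:ℝ) < L := by linarith
  have hβ0 : (0:ℝ) < β := by linarith
  have hβs0 : (0:ℝ) < βs := by linarith
  have hlogε : Real.log ε = -L := by
    rw [hLdef, one_div, Real.log_inv, neg_neg]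
  have key : (d2 - d1 / βs) * L ≤ d2 + (d2 - d1 / β) * L := by
    have hβsle : βs ≤ β + β / L := by
      rw [hb] at hβs2
      have h2 : (1 + 1 / L) * β = β + β / L := by field_simp
      linarith [h2 ▸ hβs2]
    have hA : L * (βs - β) ≤ β := by
      have := mul_le_mul_of_nonneg_left hβsle hL0.le
      have h3 : L * (β / L) = β := by field_simp
      nlinarith [this, h3]
    have h1 : L * (d1 / β - d1 / βs) ≤ d1 / β := by
      have e : L * (d1 / β - d1 / βs) = L * d1 * (βs - β) / (β * βs) := by
        field_simp
      rw [e, div_le_div_iff₀ (by positivity) hβ0]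
      nlinarith [mul_le_mul_of_nonneg_left hA (mul_pos hd1 hβ0).le,
        mul_le_mul_of_nonneg_left hβs1 (mul_pos hd1 hβ0).le]
    nlinarith [h1]
  calc (1 / ε) ^ (d2 - d1 / βs) = Real.exp ((d2 - d1 / βs) * L) := by
        rw [Real.rpow_def_of_pos hεinv, ← hLdef, mul_comm]
    _ ≤ Real.exp (d2 + (d2 - d1 / β) * L) := Real.exp_le_exp.mpr key
    _ = Real.exp d2 * ε ^ (d1 / β - d2) := by
        rw [Real.exp_add, Real.rpow_def_of_pos hε0, hlogε]
        congr 1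
        ring
end
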